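/- arXiv:2107.04592 — 2 statements merged into one kernel-verified Lean document; each statement's English description precedes it below -/
import Mathlib

section
/- There exists a finite constant K (depending only on a and b) such that for all β₁, β₂ ∈ [0,1]: ∑_{j=1}^∞ (1/σ_j) · (ψ_j(β₁) - ψ_j(β₂))² ≤ K·(|β₁ - β₂|² + |β₁ - β₂|^{1/2}). In particular the left-hand series converges for all β₁, β₂ ∈ [0,1]. -/
open Real

/-- `c = -b/(2a)`. -/
noncomputable def cc (a b : ℝ) : ℝ := -b / (2 * a)

/-- The eigenvalues `σ_j = a (c² + (jπ)²)`. -/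
noncomputable def sigma' (a b : ℝ) (j : ℕ) : ℝ := a * ((cc a b) ^ 2 + ((j : ℝ) * π) ^ 2)

/-- The phases `k_j = arctan(-jπ/c)` for `j ≥ 1`. -/
noncomputable def kk (a b : ℝ) (j : ℕ) : ℝ := arctan (-((j : ℝ) * π) / cc a b)

/-- The eigenfunctions: `ψ₀(x) = √(2c/(1-e^{-2c}))`, and
`ψ_j(x) = √2 e^{cx} sin(jπx + k_j)` for `j ≥ 1`. -/
noncomputable def psi (a b : ℝ) : ℕ → ℝ → ℝ
  | 0, _ => Real.sqrt (2 * cc a b / (1 - Real.exp (-2 * cc a b)))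
  | (j + 1), x =>
      Real.sqrt 2 * Real.exp (cc a b * x) * Real.sin (((j : ℝ) + 1) * π * x + kk a b (j + 1))

/-- The exponential is Lipschitz on `(-∞, m]` with constant `e^m`. -/
lemma exp_lip_aux {x y m : ℝ} (hx : x ≤ m) (hy : y ≤ m) :
    |Real.exp x - Real.exp y| ≤ Real.exp m * |x - y| := by
  wlog h : y ≤ x generalizing x y
  · rw [abs_sub_comm, abs_sub_comm x y]
    exact this hy hx (le_of_not_ge h)
  rw [abs_of_nonneg (sub_nonneg.2 (Real.exp_le_exp.2 h)),
      abs_of_nonneg (sub_nonneg.2 h)]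
  have h1 : -(x - y) + 1 ≤ Real.exp (-(x - y)) := Real.add_one_le_exp _
  have h2 : Real.exp (-(x - y)) * Real.exp (x - y) = 1 := by
    rw [← Real.exp_add]; simp
  have h3 : Real.exp y * Real.exp (x - y) = Real.exp x := by
    rw [← Real.exp_add]; ring_nf
  have h4 : Real.exp x ≤ Real.exp m := Real.exp_le_exp.2 hx
  have h5 : 0 < Real.exp y := Real.exp_pos y
  have h6 : 0 < Real.exp (x - y) := Real.exp_pos _
  have hA : (-(x - y) + 1) * Real.exp (x - y) ≤ 1 := by
    calc (-(x - y) + 1) * Real.exp (x - y) ≤ Real.exp (-(x - y)) * Real.exp (x - y) :=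
          mul_le_mul_of_nonneg_right h1 h6.le
      _ = 1 := h2
  have hBB : Real.exp x - (x - y) * Real.exp x ≤ Real.exp y := by
    have := mul_le_mul_of_nonneg_right hA h5.le
    nlinarith
  have hxy : 0 ≤ x - y := sub_nonneg.2 h
  have hC : (x - y) * Real.exp x ≤ (x - y) * Real.exp m := mul_le_mul_of_nonneg_left h4 hxy
  linarith

/-- Sine is 1-Lipschitz. -/
lemma sin_lip_aux (x y : ℝ) : |Real.sin x - Real.sin y| ≤ |x - y| := by
  rw [Real.sin_sub_sin]
  have h1 : |Real.sin ((x - y) / 2)| ≤ |(x - y) / 2| := Real.abs_sin_le_abs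
  have h2 : |Real.cos ((x + y) / 2)| ≤ 1 := Real.abs_cos_le_one _
  calc |2 * Real.sin ((x - y) / 2) * Real.cos ((x + y) / 2)|
      = 2 * |Real.sin ((x - y) / 2)| * |Real.cos ((x + y) / 2)| := by
        rw [abs_mul, abs_mul]; norm_num
    _ ≤ 2 * |(x - y) / 2| * 1 := by
        apply mul_le_mul _ h2 (abs_nonneg _) (by positivity)
        exact mul_le_mul_of_nonneg_left h1 (by norm_num)
    _ = |x - y| := by rw [abs_div, mul_one]; simp [abs_of_nonneg]; ring

set_option maxHeartbeats 1000000 in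
/-- there is a finite constant `K` (depending only on `a`, `b`) such
that for all `β₁, β₂ ∈ [0,1]` the series `∑_{j=1}^∞ (1/σ_j)(ψ_j(β₁) - ψ_j(β₂))²`
converges and is bounded by `K(|β₁-β₂|² + |β₁-β₂|^{1/2})`. -/
theorem green_coeff_holder_bound (a b : ℝ) (ha : 0 < a) (hb : b ≠ 0) :
    ∃ K : ℝ, ∀ β₁ ∈ Set.Icc (0 : ℝ) 1, ∀ β₂ ∈ Set.Icc (0 : ℝ) 1,
      (Summable fun j : ℕ =>
        (1 / sigma' a b (j + 1)) * (psi a b (j + 1) β₁ - psi a b (j + 1) β₂) ^ 2) ∧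
      (∑' j : ℕ,
        (1 / sigma' a b (j + 1)) * (psi a b (j + 1) β₁ - psi a b (j + 1) β₂) ^ 2)
        ≤ K * (|β₁ - β₂| ^ 2 + Real.sqrt |β₁ - β₂|) := by
  set c := cc a b with hc
  set M : ℝ := Real.sqrt 2 * Real.exp |c| with hMdef
  have hM0 : 0 < M := by positivity
  set C0 : ℝ := 2 * M * Real.sqrt (2 * M * (M * (|c| + π))) / (a * π ^ 2) with hC0def
  have hC00 : 0 ≤ C0 := by positivity
  -- summability of the majorant
  have hg : Summable (fun j : ℕ => ((j : ℝ) + 1) ^ (-(3/2) : ℝ)) := by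
    have h := (Real.summable_nat_rpow (p := -(3/2))).mpr (by norm_num)
    have h2 := h.comp_injective (add_left_injective 1)
    have : (fun j : ℕ => ((j : ℝ) + 1) ^ (-(3/2) : ℝ))
        = (fun n : ℕ => (n : ℝ) ^ (-(3/2) : ℝ)) ∘ (fun j => j + 1) := by
      funext j; simp [Function.comp]
    rw [this]; exact h2
  have hg0 : 0 ≤ ∑' j : ℕ, ((j : ℝ) + 1) ^ (-(3/2) : ℝ) :=
    tsum_nonneg fun j => Real.rpow_nonneg (by positivity) _
  refine ⟨C0 * ∑' j : ℕ, ((j : ℝ) + 1) ^ (-(3/2) : ℝ), ?_⟩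
  intro β₁ hβ₁ β₂ hβ₂
  set δ := |β₁ - β₂| with hδdef
  have hδ0 : (0:ℝ) ≤ δ := abs_nonneg _
  -- per-term bound
  have key : ∀ j : ℕ,
      (1 / sigma' a b (j + 1)) * (psi a b (j + 1) β₁ - psi a b (j + 1) β₂) ^ 2
      ≤ C0 * Real.sqrt δ * ((j : ℝ) + 1) ^ (-(3/2) : ℝ) := by
    intro j
    set n1 : ℝ := (j : ℝ) + 1 with hn1def
    have hn1 : (1:ℝ) ≤ n1 := by
      rw [hn1def]
      have : (0:ℝ) ≤ (j:ℝ) := Nat.cast_nonneg j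
      linarith
    have hn10 : (0:ℝ) < n1 := lt_of_lt_of_le one_pos hn1
    have hπ : (0:ℝ) < π := Real.pi_pos
    -- σ bounds
    have hσeq : sigma' a b (j + 1) = a * (c ^ 2 + (n1 * π) ^ 2) := by
      simp only [sigma', hn1def, hc]
      push_cast
      ring
    have hσlb : a * π ^ 2 * n1 ^ 2 ≤ sigma' a b (j + 1) := by
      rw [hσeq]; nlinarith [sq_nonneg c]
    have hσpos : 0 < sigma' a b (j + 1) := by
      rw [hσeq]; have : 0 < (n1 * π) ^ 2 := by positivity
      nlinarith [sq_nonneg c]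
    -- notation for the eigenfunction pieces
    set E₁ := Real.exp (c * β₁) with hE₁def
    set E₂ := Real.exp (c * β₂) with hE₂def
    set θ₁ := n1 * π * β₁ + kk a b (j + 1) with hθ₁def
    set θ₂ := n1 * π * β₂ + kk a b (j + 1) with hθ₂def
    set Δ := psi a b (j + 1) β₁ - psi a b (j + 1) β₂ with hΔdef
    have hpsi : Δ
        = Real.sqrt 2 * ((E₁ - E₂) * Real.sin θ₁ + E₂ * (Real.sin θ₁ - Real.sin θ₂)) := by
      rw [hΔdef]
      simp only [psi, hE₁def, hE₂def, hθ₁def, hθ₂def, hn1def, hc]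
      ring
    -- exponent bounds
    have hcb : ∀ x ∈ Set.Icc (0:ℝ) 1, c * x ≤ |c| := by
      intro x hx
      calc c * x ≤ |c * x| := le_abs_self _
        _ = |c| * |x| := abs_mul _ _
        _ ≤ |c| * 1 := by
            apply mul_le_mul_of_nonneg_left _ (abs_nonneg _)
            rw [abs_le]; exact ⟨le_trans (by norm_num) hx.1, hx.2⟩
        _ = |c| := mul_one _
    have hE₂le : E₂ ≤ Real.exp |c| := Real.exp_le_exp.2 (hcb β₂ hβ₂)
    have hEdiff : |E₁ - E₂| ≤ Real.exp |c| * (|c| * δ) := by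
      have := exp_lip_aux (hcb β₁ hβ₁) (hcb β₂ hβ₂)
      have heq : |c * β₁ - c * β₂| = |c| * δ := by
        rw [hδdef, ← abs_mul]; ring_nf
      rw [hE₁def, hE₂def]
      calc |Real.exp (c * β₁) - Real.exp (c * β₂)| ≤ Real.exp |c| * |c * β₁ - c * β₂| := this
        _ = Real.exp |c| * (|c| * δ) := by rw [heq]
    have hSdiff : |Real.sin θ₁ - Real.sin θ₂| ≤ n1 * π * δ := by
      have := sin_lip_aux θ₁ θ₂
      have heq : |θ₁ - θ₂| = n1 * π * δ := by
        rw [hθ₁def, hθ₂def, hδdef]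
        rw [show n1 * π * β₁ + kk a b (j+1) - (n1 * π * β₂ + kk a b (j+1)) = n1 * π * (β₁ - β₂) by ring,
          abs_mul, abs_of_nonneg (by positivity : (0:ℝ) ≤ n1 * π)]
      rw [← heq]; exact this
    -- |Δ| ≤ 2M
    have hB : |Δ| ≤ 2 * M := by
      rw [hΔdef]
      have h1 : ∀ x ∈ Set.Icc (0:ℝ) 1, |psi a b (j+1) x| ≤ M := by
        intro x hx
        have : psi a b (j+1) x = Real.sqrt 2 * Real.exp (c * x) * Real.sin (n1 * π * x + kk a b (j+1)) := by
          simp only [psi, hn1def, hc]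
        rw [this, hMdef, abs_mul, abs_mul]
        have hs : |Real.sin (n1 * π * x + kk a b (j+1))| ≤ 1 := Real.abs_sin_le_one _
        have he : |Real.exp (c * x)| ≤ Real.exp |c| := by
          rw [abs_of_pos (Real.exp_pos _)]; exact Real.exp_le_exp.2 (hcb x hx)
        calc |Real.sqrt 2| * |Real.exp (c * x)| * |Real.sin (n1 * π * x + kk a b (j+1))|
            ≤ |Real.sqrt 2| * Real.exp |c| * 1 := by
              apply mul_le_mul _ hs (abs_nonneg _) (by positivity)
              exact mul_le_mul_of_nonneg_left he (abs_nonneg _)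
          _ = Real.sqrt 2 * Real.exp |c| := by
              rw [mul_one, abs_of_nonneg (Real.sqrt_nonneg 2)]
      calc |psi a b (j+1) β₁ - psi a b (j+1) β₂|
          ≤ |psi a b (j+1) β₁| + |psi a b (j+1) β₂| := abs_sub _ _
        _ ≤ M + M := add_le_add (h1 β₁ hβ₁) (h1 β₂ hβ₂)
        _ = 2 * M := by ring
    -- Lipschitz bound
    have hL : |Δ| ≤ M * (|c| + n1 * π) * δ := by
      rw [hpsi, abs_mul, abs_of_nonneg (Real.sqrt_nonneg 2)]
      have hin : |(E₁ - E₂) * Real.sin θ₁ + E₂ * (Real.sin θ₁ - Real.sin θ₂)|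
          ≤ Real.exp |c| * (|c| * δ) + Real.exp |c| * (n1 * π * δ) := by
        calc |(E₁ - E₂) * Real.sin θ₁ + E₂ * (Real.sin θ₁ - Real.sin θ₂)|
            ≤ |(E₁ - E₂) * Real.sin θ₁| + |E₂ * (Real.sin θ₁ - Real.sin θ₂)| := abs_add_le _ _
          _ = |E₁ - E₂| * |Real.sin θ₁| + |E₂| * |Real.sin θ₁ - Real.sin θ₂| := by
              rw [abs_mul, abs_mul]
          _ ≤ Real.exp |c| * (|c| * δ) * 1 + Real.exp |c| * (n1 * π * δ) := by
              apply add_le_add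
              · exact mul_le_mul hEdiff (Real.abs_sin_le_one _) (abs_nonneg _) (by positivity)
              · apply mul_le_mul _ hSdiff (abs_nonneg _) (Real.exp_nonneg _)
                rw [abs_of_pos (Real.exp_pos _)]; exact hE₂le
          _ = Real.exp |c| * (|c| * δ) + Real.exp |c| * (n1 * π * δ) := by ring
      calc Real.sqrt 2 * |(E₁ - E₂) * Real.sin θ₁ + E₂ * (Real.sin θ₁ - Real.sin θ₂)|
          ≤ Real.sqrt 2 * (Real.exp |c| * (|c| * δ) + Real.exp |c| * (n1 * π * δ)) :=
            mul_le_mul_of_nonneg_left hin (Real.sqrt_nonneg 2)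
        _ = M * (|c| + n1 * π) * δ := by rw [hMdef]; ring
    -- combine: Δ² ≤ 2M √(2M (M(|c|+π)) n1 δ)
    have habs0 : (0:ℝ) ≤ |Δ| := abs_nonneg _
    have hsq1 : |Δ| ^ 2 ≤ 2 * M * (M * (|c| + n1 * π) * δ) := by
      have := mul_le_mul hB hL habs0 (by positivity)
      calc |Δ| ^ 2 = |Δ| * |Δ| := sq |Δ|
        _ ≤ 2 * M * (M * (|c| + n1 * π) * δ) := this
    have hsq2 : |Δ| ≤ Real.sqrt (2 * M * (M * (|c| + n1 * π) * δ)) := by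
      rw [← Real.sqrt_sq_eq_abs, ← sq_abs]
      exact Real.sqrt_le_sqrt hsq1
    have hΔsq : Δ ^ 2 ≤ 2 * M * Real.sqrt (2 * M * (M * (|c| + n1 * π) * δ)) := by
      calc Δ ^ 2 = |Δ| * |Δ| := by rw [← sq, sq_abs]
        _ ≤ 2 * M * Real.sqrt (2 * M * (M * (|c| + n1 * π) * δ)) :=
            mul_le_mul hB hsq2 habs0 (by positivity)
    have hsqrtbnd : Real.sqrt (2 * M * (M * (|c| + n1 * π) * δ))
        ≤ Real.sqrt (2 * M * (M * (|c| + π))) * (Real.sqrt n1 * Real.sqrt δ) := by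
      have hstep : |c| + n1 * π ≤ (|c| + π) * n1 := by
        have h0 : 0 ≤ |c| * (n1 - 1) := mul_nonneg (abs_nonneg c) (sub_nonneg.2 hn1)
        nlinarith
      have hle : 2 * M * (M * (|c| + n1 * π) * δ) ≤ 2 * M * (M * (|c| + π)) * (n1 * δ) := by
        have h2 : (|c| + n1 * π) * δ ≤ (|c| + π) * n1 * δ :=
          mul_le_mul_of_nonneg_right hstep hδ0
        have h3 : 2 * M * M * ((|c| + n1 * π) * δ) ≤ 2 * M * M * ((|c| + π) * n1 * δ) :=
          mul_le_mul_of_nonneg_left h2 (by positivity)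
        calc 2 * M * (M * (|c| + n1 * π) * δ) = 2 * M * M * ((|c| + n1 * π) * δ) := by ring
          _ ≤ 2 * M * M * ((|c| + π) * n1 * δ) := h3
          _ = 2 * M * (M * (|c| + π)) * (n1 * δ) := by ring
      calc Real.sqrt (2 * M * (M * (|c| + n1 * π) * δ))
          ≤ Real.sqrt (2 * M * (M * (|c| + π)) * (n1 * δ)) := Real.sqrt_le_sqrt hle
        _ = Real.sqrt (2 * M * (M * (|c| + π))) * Real.sqrt (n1 * δ) :=
            Real.sqrt_mul (by positivity) _
        _ = Real.sqrt (2 * M * (M * (|c| + π))) * (Real.sqrt n1 * Real.sqrt δ) := by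
            rw [Real.sqrt_mul hn10.le]
    have hΔsq2 : Δ ^ 2 ≤ 2 * M * Real.sqrt (2 * M * (M * (|c| + π))) * (Real.sqrt n1 * Real.sqrt δ) := by
      calc Δ ^ 2 ≤ 2 * M * Real.sqrt (2 * M * (M * (|c| + n1 * π) * δ)) := hΔsq
        _ ≤ 2 * M * (Real.sqrt (2 * M * (M * (|c| + π))) * (Real.sqrt n1 * Real.sqrt δ)) :=
            mul_le_mul_of_nonneg_left hsqrtbnd (by positivity)
        _ = 2 * M * Real.sqrt (2 * M * (M * (|c| + π))) * (Real.sqrt n1 * Real.sqrt δ) := by ring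
    -- final combination
    have hrpow : Real.sqrt n1 / n1 ^ 2 = n1 ^ (-(3/2) : ℝ) := by
      rw [Real.sqrt_eq_rpow, ← Real.rpow_natCast n1 2, ← Real.rpow_sub hn10]
      norm_num
    have hterm : (1 / sigma' a b (j + 1)) * Δ ^ 2
        ≤ (1 / (a * π ^ 2 * n1 ^ 2)) * (2 * M * Real.sqrt (2 * M * (M * (|c| + π))) * (Real.sqrt n1 * Real.sqrt δ)) := by
      apply mul_le_mul _ hΔsq2 (sq_nonneg _) (by positivity)
      apply one_div_le_one_div_of_le (by positivity) hσlb
    calc (1 / sigma' a b (j + 1)) * Δ ^ 2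
        ≤ (1 / (a * π ^ 2 * n1 ^ 2)) * (2 * M * Real.sqrt (2 * M * (M * (|c| + π))) * (Real.sqrt n1 * Real.sqrt δ)) := hterm
      _ = C0 * Real.sqrt δ * (Real.sqrt n1 / n1 ^ 2) := by
          rw [hC0def]; field_simp
      _ = C0 * Real.sqrt δ * n1 ^ (-(3/2) : ℝ) := by rw [hrpow]
  -- conclude
  have hnn : ∀ j : ℕ, 0 ≤ (1 / sigma' a b (j + 1)) * (psi a b (j + 1) β₁ - psi a b (j + 1) β₂) ^ 2 := by
    intro j
    have hσpos : 0 < sigma' a b (j + 1) := by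
      have hπ : (0:ℝ) < π := Real.pi_pos
      have : (0:ℝ) < (((j:ℝ)+1) * π) ^ 2 := by positivity
      simp only [sigma']
      push_cast
      nlinarith [sq_nonneg (cc a b)]
    exact mul_nonneg (by positivity) (sq_nonneg _)
  have hgsum : Summable (fun j : ℕ => C0 * Real.sqrt δ * ((j : ℝ) + 1) ^ (-(3/2) : ℝ)) :=
    hg.mul_left _
  have hsum : Summable (fun j : ℕ =>
      (1 / sigma' a b (j + 1)) * (psi a b (j + 1) β₁ - psi a b (j + 1) β₂) ^ 2) :=
    Summable.of_nonneg_of_le hnn key hgsum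
  refine ⟨hsum, ?_⟩
  have hsqδ : 0 ≤ Real.sqrt δ := Real.sqrt_nonneg _
  calc (∑' j : ℕ, (1 / sigma' a b (j + 1)) * (psi a b (j + 1) β₁ - psi a b (j + 1) β₂) ^ 2)
      ≤ ∑' j : ℕ, C0 * Real.sqrt δ * ((j : ℝ) + 1) ^ (-(3/2) : ℝ) :=
        Summable.tsum_le_tsum key hsum hgsum
    _ = C0 * Real.sqrt δ * ∑' j : ℕ, ((j : ℝ) + 1) ^ (-(3/2) : ℝ) := tsum_mul_left
    _ = (C0 * ∑' j : ℕ, ((j : ℝ) + 1) ^ (-(3/2) : ℝ)) * Real.sqrt δ := by ring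
    _ ≤ (C0 * ∑' j : ℕ, ((j : ℝ) + 1) ^ (-(3/2) : ℝ)) * (δ ^ 2 + Real.sqrt δ) := by
        apply mul_le_mul_of_nonneg_left _ (mul_nonneg hC00 hg0)
        nlinarith [sq_nonneg δ]
end

section
/- For every t₁ > 0 there exists a finite constant K (depending only on a, b, t₁) such that for all β₁, β₂ ∈ [0,1]: ∫₀^{t₁} ∫₀¹ (P_s(β₁, x) - P_s(β₂, x))² dx ds ≤ K·(|β₁ - β₂|² + |β₁ - β₂|^{1/2}). -/
open Real

/-- The Green's function `P_t(y,x) = ∑_{j=0}^∞ e^{-σ_j t} ψ_j(y) ψ_j(x)` of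
`L = a∂²ₓ + b∂ₓ` with Neumann boundary conditions on `[0,1]`. -/
noncomputable def greenP (a b : ℝ) (t y x : ℝ) : ℝ :=
  ∑' j : ℕ, Real.exp (-sigma' a b j * t) * psi a b j y * psi a b j x

/-!
Write `ψ_j = e^{cx} φ_j` with `φ_j = √2 sin(jπx + k_j)`. The phases `k_j` give `φ_j` the Robin
condition `φ_j' = -c φ_j` at `0` and `1`, so the `φ_j`, `j ≥ 1`, are orthonormal on `[0,1]` (the
Wronskian of two of them vanishes at both endpoints). As `ψ₀` is constant,
`P_s(β₁,·) - P_s(β₂,·) = e^{cx} ∑_{j≥1} e^{-σ_j s} d_j φ_j` with `d_j = ψ_j(β₁) - ψ_j(β₂)`, and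
Parseval bounds its squared `L²(0,1)` norm by `e^{2|c|} ∑_j e^{-2σ_j s} d_j²`. Integrating over
`s > 0` leaves `e^{2|c|} ∑_j d_j² / (2σ_j)`. Finally `|d_j| ≤ min (2B, L j |β₁ - β₂|)` gives
`d_j² ≤ C √j √|β₁ - β₂|`, and `σ_j ≥ aπ²j²` makes the series converge.
-/

open Set MeasureTheory Filter

section Parseval

variable {X : Type*} {φ : ℕ → X → ℝ} {M : ℝ} {α : ℕ → ℝ}

lemma summable_mul_of_abs_le (hφb : ∀ j x, |φ j x| ≤ M) (hα : Summable fun j => |α j|) (x : X) :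
    Summable fun j => α j * φ j x :=
  (hα.mul_right M).of_norm_bounded fun j => by
    rw [norm_mul, Real.norm_eq_abs, Real.norm_eq_abs]
    exact mul_le_mul_of_nonneg_left (hφb j x) (abs_nonneg _)

lemma abs_tsum_mul_le (hφb : ∀ j x, |φ j x| ≤ M) (hα : Summable fun j => |α j|) (x : X) :
    |∑' j, α j * φ j x| ≤ ∑' j, |α j| * M :=
  tsum_of_norm_bounded (f := fun j => α j * φ j x) (hα.mul_right M).hasSum fun j => by
    rw [norm_mul, Real.norm_eq_abs]
    exact mul_le_mul_of_nonneg_left (hφb j x) (abs_nonneg _)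

lemma aestronglyMeasurable_tsum_mul [MeasurableSpace X] {μ : Measure X}
    (hφm : ∀ j, AEStronglyMeasurable (φ j) μ) (hφb : ∀ j x, |φ j x| ≤ M)
    (hα : Summable fun j => |α j|) :
    AEStronglyMeasurable (fun x => ∑' j, α j * φ j x) μ :=
  aestronglyMeasurable_of_tendsto_ae atTop
    (fun _ => Finset.aestronglyMeasurable_fun_sum _ fun j _ => (hφm j).const_mul (α j))
    (ae_of_all _ fun x => (summable_mul_of_abs_le hφb hα x).hasSum.tendsto_sum_nat)

variable [MeasurableSpace X] {μ : Measure X} [IsFiniteMeasure μ]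

lemma integral_tsum_mul_mul (hφm : ∀ j, AEStronglyMeasurable (φ j) μ)
    (hφb : ∀ j x, |φ j x| ≤ M) (hα : Summable fun j => |α j|) {g : X → ℝ} {G : ℝ}
    (hgm : AEStronglyMeasurable g μ) (hgb : ∀ x, |g x| ≤ G) :
    ∫ x, (∑' j, α j * φ j x) * g x ∂μ = ∑' j, α j * ∫ x, φ j x * g x ∂μ := by
  have hbound : ∀ j x, ‖α j * (φ j x * g x)‖ ≤ |α j| * (M * G) := fun j x => by
    rw [norm_mul, norm_mul, Real.norm_eq_abs, Real.norm_eq_abs, Real.norm_eq_abs]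
    exact mul_le_mul_of_nonneg_left
      (mul_le_mul (hφb j x) (hgb x) (abs_nonneg _) ((abs_nonneg _).trans (hφb j x)))
      (abs_nonneg _)
  have hint : ∀ j, Integrable (fun x => α j * (φ j x * g x)) μ := fun j =>
    .of_bound (((hφm j).mul hgm).const_mul (α j)) _ (ae_of_all _ (hbound j))
  simp_rw [← tsum_mul_right, mul_assoc, ← integral_const_mul]
  refine (integral_tsum_of_summable_integral_norm hint ?_).symm
  refine (hα.mul_right (M * G * μ.real univ)).of_nonneg_of_le
    (fun j => integral_nonneg fun x => norm_nonneg _) fun j => ?_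
  calc ∫ x, ‖α j * (φ j x * g x)‖ ∂μ ≤ ‖∫ x, ‖α j * (φ j x * g x)‖ ∂μ‖ := le_abs_self _
    _ ≤ |α j| * (M * G) * μ.real univ :=
        norm_integral_le_of_norm_le_const (ae_of_all _ fun x => by
          rw [norm_norm]; exact hbound j x)
    _ = |α j| * (M * G * μ.real univ) := by ring

theorem integral_tsum_mul_sq_eq_tsum_sq
    (hφm : ∀ j, AEStronglyMeasurable (φ j) μ) (hφb : ∀ j x, |φ j x| ≤ M)
    (horth : ∀ j k, ∫ x, φ j x * φ k x ∂μ = if j = k then 1 else 0)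
    (hα : Summable fun j => |α j|) :
    ∫ x, (∑' j, α j * φ j x) ^ 2 ∂μ = ∑' j, α j ^ 2 := by
  have hm := aestronglyMeasurable_tsum_mul hφm hφb hα
  have hb := abs_tsum_mul_le hφb hα
  have hcoef : ∀ j, ∫ x, φ j x * ∑' k, α k * φ k x ∂μ = α j := fun j => by
    simp_rw [mul_comm (φ j _)]
    rw [integral_tsum_mul_mul hφm hφb hα (hφm j) (hφb j), tsum_eq_single j fun k hk => by
      simp [horth, hk]]
    simp [horth]
  simp_rw [sq, integral_tsum_mul_mul hφm hφb hα hm hb, hcoef]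

end Parseval

lemma ENNReal.ofReal_tsum_le {f : ℕ → ℝ} (hf : ∀ j, 0 ≤ f j) :
    ENNReal.ofReal (∑' j, f j) ≤ ∑' j, ENNReal.ofReal (f j) := by
  by_cases h : Summable f
  · exact (ENNReal.ofReal_tsum_of_nonneg hf h).le
  · simp [tsum_eq_zero_of_not_summable h]

lemma lintegral_Ioi_ofReal_mul_exp {w σ : ℝ} (hw : 0 ≤ w) (hσ : 0 < σ) :
    ∫⁻ s in Ioi 0, ENNReal.ofReal (w * exp (-σ * s)) = ENNReal.ofReal (w / σ) := by
  have hneg : -σ < 0 := neg_lt_zero.2 hσ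
  rw [← ofReal_integral_eq_lintegral_ofReal ((integrableOn_exp_mul_Ioi hneg 0).const_mul w)
    (ae_of_all _ fun s => by positivity), integral_const_mul, integral_exp_mul_Ioi hneg]
  congr 1
  simp only [mul_zero, exp_zero]
  ring

theorem integral_le_tsum_div_of_abs_le_tsum_mul_exp {S : Set ℝ} (hS : S ⊆ Ioi 0)
    {g : ℝ → ℝ} {w σ : ℕ → ℝ} (hw : ∀ j, 0 ≤ w j) (hσ : ∀ j, 0 < σ j)
    (hsum : Summable fun j => w j / σ j)
    (hg : ∀ s ∈ Ioi 0, |g s| ≤ ∑' j, w j * exp (-σ j * s)) :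
    ∫ s in S, g s ≤ ∑' j, w j / σ j := by
  have hw' : ∀ j s, 0 ≤ w j * exp (-σ j * s) := fun j s => by have := hw j; positivity
  refine (le_abs_self _).trans ((ENNReal.ofReal_le_ofReal_iff (tsum_nonneg fun j =>
    div_nonneg (hw j) (hσ j).le)).1 ?_)
  calc ENNReal.ofReal |∫ s in S, g s| = ‖∫ s in S, g s‖ₑ := (Real.enorm_eq_ofReal_abs _).symm
    _ ≤ ∫⁻ s in S, ‖g s‖ₑ := enorm_integral_le_lintegral_enorm _
    _ ≤ ∫⁻ s in Ioi 0, ‖g s‖ₑ := lintegral_mono_set hS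
    _ ≤ ∫⁻ s in Ioi 0, ∑' j, ENNReal.ofReal (w j * exp (-σ j * s)) :=
        setLIntegral_mono' measurableSet_Ioi fun s hs => by
          rw [Real.enorm_eq_ofReal_abs]
          exact (ENNReal.ofReal_le_ofReal (hg s hs)).trans (ENNReal.ofReal_tsum_le (hw' · s))
    _ = ∑' j, ENNReal.ofReal (w j / σ j) := by
        rw [lintegral_tsum fun j => by fun_prop]
        exact tsum_congr fun j => lintegral_Ioi_ofReal_mul_exp (hw j) (hσ j)
    _ = ENNReal.ofReal (∑' j, w j / σ j) :=
        (ENNReal.ofReal_tsum_of_nonneg (fun j => div_nonneg (hw j) (hσ j).le) hsum).symm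

theorem integral_mul_eq_zero_of_wronskian {f f' g g' : ℝ → ℝ} {p q a b : ℝ}
    (hf : ∀ x, HasDerivAt f (f' x) x) (hf' : ∀ x, HasDerivAt f' (-p * f x) x)
    (hg : ∀ x, HasDerivAt g (g' x) x) (hg' : ∀ x, HasDerivAt g' (-q * g x) x) (hpq : p ≠ q)
    (ha : f' a * g a = f a * g' a) (hb : f' b * g b = f b * g' b) :
    ∫ x in a..b, f x * g x = 0 := by
  have hW : ∀ x, HasDerivAt (fun x => f' x * g x - f x * g' x) ((q - p) * (f x * g x)) x :=
    fun x => (((hf' x).mul (hg x)).sub ((hf x).mul (hg' x))).congr_deriv (by ring)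
  have hcont : Continuous fun x => (q - p) * (f x * g x) :=
    continuous_const.mul ((continuous_iff_continuousAt.2 fun x => (hf x).continuousAt).mul
      (continuous_iff_continuousAt.2 fun x => (hg x).continuousAt))
  have := intervalIntegral.integral_eq_sub_of_hasDerivAt (fun x _ => hW x)
    (hcont.intervalIntegrable a b)
  rw [intervalIntegral.integral_const_mul, ha, hb, sub_self, sub_self, sub_self] at this
  exact (mul_eq_zero.1 this).resolve_left (sub_ne_zero.2 hpq.symm)

lemma exp_mul_le_exp_abs (c : ℝ) {x : ℝ} (hx : x ∈ Icc (0 : ℝ) 1) : exp (c * x) ≤ exp |c| := by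
  refine exp_le_exp.2 ((le_abs_self _).trans ?_)
  rw [abs_mul]
  exact mul_le_of_le_one_right (abs_nonneg c) (abs_le.2 ⟨by linarith [hx.1], hx.2⟩)

lemma sq_le_mul_sqrt_mul_of_abs_le {d A E : ℝ} (hA : |d| ≤ A) (hE : |d| ≤ E) :
    d ^ 2 ≤ A * √(A * E) := by
  have hA0 : 0 ≤ A := (abs_nonneg d).trans hA
  calc d ^ 2 = |d| * √(|d| * |d|) := by rw [sqrt_mul_self (abs_nonneg d), ← sq, sq_abs]
    _ ≤ A * √(A * E) :=
        mul_le_mul hA (sqrt_le_sqrt (mul_le_mul hA hE (abs_nonneg d) hA0)) (sqrt_nonneg _) hA0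

lemma summable_sqrt_div_sq : Summable fun j : ℕ => √((j : ℝ) + 1) / ((j : ℝ) + 1) ^ 2 := by
  refine ((summable_nat_add_iff 1).2
    (summable_nat_rpow_inv.2 (by norm_num : (1 : ℝ) < 3 / 2))).congr fun j => ?_
  have hj : (0 : ℝ) < j + 1 := by positivity
  push_cast
  rw [sqrt_eq_rpow, ← rpow_natCast, ← rpow_sub hj, ← rpow_neg hj.le]
  norm_num

/-- `φ_j = e^{-cx} ψ_j` for `j ≥ 1`. -/
noncomputable def phi (a b : ℝ) (j : ℕ) (x : ℝ) : ℝ := √2 * sin (j * π * x + kk a b j)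

lemma cc_ne_zero {a b : ℝ} (ha : 0 < a) (hb : b ≠ 0) : cc a b ≠ 0 :=
  div_ne_zero (neg_ne_zero.2 hb) (by positivity)

/-- `φ_j' = -c φ_j` at the integers, i.e. the Neumann condition for `ψ_j = e^{cx} φ_j`. -/
lemma mul_cos_add_cc_mul_sin_eq_zero {a b : ℝ} (hc : cc a b ≠ 0) (j n : ℕ) :
    j * π * cos (j * π * n + kk a b j) + cc a b * sin (j * π * n + kk a b j) = 0 := by
  have hshift : (j : ℝ) * π * n + kk a b j = kk a b j + ((j * n : ℕ) : ℝ) * π := by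
    push_cast; ring
  rw [hshift, cos_add_nat_mul_pi, sin_add_nat_mul_pi, kk, cos_arctan, sin_arctan]
  field_simp
  ring

lemma hasDerivAt_phi (a b : ℝ) (j : ℕ) (x : ℝ) :
    HasDerivAt (phi a b j) (√2 * (j * π) * cos (j * π * x + kk a b j)) x := by
  have h := ((hasDerivAt_const_mul (x := x) ((j : ℝ) * π)).add_const (kk a b j)).sin.const_mul √2
  exact h.congr_deriv (by ring)

lemma hasDerivAt_deriv_phi (a b : ℝ) (j : ℕ) (x : ℝ) :
    HasDerivAt (fun x => √2 * (j * π) * cos (j * π * x + kk a b j))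
      (-((j : ℝ) * π) ^ 2 * phi a b j x) x := by
  have h := ((hasDerivAt_const_mul (x := x) ((j : ℝ) * π)).add_const (kk a b j)).cos.const_mul
    (√2 * (j * π))
  exact h.congr_deriv (by unfold phi; ring)

lemma integral_phi_mul_phi_of_ne {a b : ℝ} (ha : 0 < a) (hb : b ≠ 0) {j k : ℕ} (hjk : j ≠ k) :
    ∫ x in (0 : ℝ)..1, phi a b j x * phi a b k x = 0 := by
  have hrobin : ∀ (l : ℕ) (n : ℕ), √2 * (l * π) * cos (l * π * n + kk a b l) =
      -cc a b * phi a b l n := fun l n => by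
    rw [phi]; linear_combination √2 * mul_cos_add_cc_mul_sin_eq_zero (cc_ne_zero ha hb) l n
  refine integral_mul_eq_zero_of_wronskian (hasDerivAt_phi a b j) (hasDerivAt_deriv_phi a b j)
    (hasDerivAt_phi a b k) (hasDerivAt_deriv_phi a b k) ?_ ?_ ?_
  · intro h
    rw [mul_pow, mul_pow] at h
    have h' : (j : ℝ) ^ 2 = (k : ℝ) ^ 2 := mul_right_cancel₀ (pow_ne_zero 2 pi_ne_zero) h
    exact hjk (by exact_mod_cast (pow_left_inj₀ j.cast_nonneg k.cast_nonneg two_ne_zero).1 h')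
  · have h0 := hrobin j 0; have h0' := hrobin k 0
    push_cast at h0 h0'
    rw [h0, h0']; ring
  · have h1 := hrobin j 1; have h1' := hrobin k 1
    push_cast at h1 h1'
    rw [h1, h1']; ring

lemma integral_phi_sq {a b : ℝ} {j : ℕ} (hj : j ≠ 0) :
    ∫ x in (0 : ℝ)..1, phi a b j x * phi a b j x = 1 := by
  have hω : (j : ℝ) * π ≠ 0 := by positivity
  have hsq : ∀ x, phi a b j x * phi a b j x = 2 * sin ((j : ℝ) * π * x + kk a b j) ^ 2 :=
    fun x => by rw [phi, mul_mul_mul_comm, Real.mul_self_sqrt zero_le_two, sq]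
  have hper : ∀ y, sin (y + j * π) * cos (y + j * π) = sin y * cos y := fun y => by
    rw [sin_add_nat_mul_pi, cos_add_nat_mul_pi, mul_mul_mul_comm, ← pow_add, ← two_mul, pow_mul]
    simp
  simp_rw [hsq]
  rw [intervalIntegral.integral_const_mul,
    intervalIntegral.integral_comp_mul_add (fun x => sin x ^ 2) hω, integral_sin_sq]
  simp only [mul_zero, zero_add, mul_one, smul_eq_mul]
  rw [add_comm _ (kk a b j), hper]
  field_simp
  ring

lemma abs_phi_le (a b : ℝ) (j : ℕ) (x : ℝ) : |phi a b j x| ≤ √2 := by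
  rw [phi, abs_mul, abs_of_nonneg (sqrt_nonneg 2)]
  exact mul_le_of_le_one_right (sqrt_nonneg 2) (abs_sin_le_one _)

lemma psi_succ (a b : ℝ) (j : ℕ) (x : ℝ) :
    psi a b (j + 1) x = exp (cc a b * x) * phi a b (j + 1) x := by
  rw [psi, phi]; push_cast; ring

lemma exists_abs_psi_le (a b : ℝ) : ∃ B, ∀ j, ∀ x ∈ Icc (0 : ℝ) 1, |psi a b j x| ≤ B := by
  refine ⟨psi a b 0 0 + exp |cc a b| * √2, fun j x hx => ?_⟩
  have h0 : 0 ≤ psi a b 0 0 := sqrt_nonneg _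
  cases j with
  | zero => exact (abs_of_nonneg h0).trans_le (le_add_of_nonneg_right (by positivity))
  | succ j =>
    rw [psi_succ, abs_mul, abs_of_pos (exp_pos _)]
    exact (mul_le_mul (exp_mul_le_exp_abs _ hx) (abs_phi_le a b (j + 1) x) (abs_nonneg _)
      (exp_pos _).le).trans (le_add_of_nonneg_left h0)

lemma exists_abs_psi_succ_sub_le (a b : ℝ) : ∃ L, ∀ j : ℕ, ∀ y ∈ Icc (0 : ℝ) 1,
    ∀ y' ∈ Icc (0 : ℝ) 1, |psi a b (j + 1) y - psi a b (j + 1) y'| ≤ L * (j + 1) * |y - y'| := by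
  set c := cc a b
  refine ⟨√2 * exp |c| * (|c| + π), fun j y hy y' hy' => ?_⟩
  set ω : ℝ := (j + 1) * π
  set k := kk a b (j + 1)
  have hderiv : ∀ x, HasDerivAt (psi a b (j + 1))
      (√2 * exp (c * x) * (c * sin (ω * x + k) + ω * cos (ω * x + k))) x := fun x => by
    have h := (((hasDerivAt_const_mul (x := x) c).exp).const_mul √2).mul
      ((hasDerivAt_const_mul (x := x) ω).add_const k).sin
    exact h.congr_deriv (by ring)
  have hbound : ∀ x ∈ Icc (0 : ℝ) 1,
      ‖√2 * exp (c * x) * (c * sin (ω * x + k) + ω * cos (ω * x + k))‖ ≤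
        √2 * exp |c| * (|c| + π) * (j + 1) := fun x hx => by
    have hω : |c| + ω ≤ (|c| + π) * (j + 1) := by
      have := abs_nonneg c; have := j.cast_nonneg (α := ℝ); nlinarith
    have htrig : |c * sin (ω * x + k) + ω * cos (ω * x + k)| ≤ |c| + ω := by
      refine (abs_add_le _ _).trans (add_le_add ?_ ?_) <;> rw [abs_mul]
      · exact mul_le_of_le_one_right (abs_nonneg c) (abs_sin_le_one _)
      · rw [abs_of_pos (by positivity : 0 < ω)]
        exact mul_le_of_le_one_right (by positivity) (abs_cos_le_one _)
    rw [Real.norm_eq_abs, abs_mul, abs_mul, abs_of_nonneg (sqrt_nonneg 2), abs_of_pos (exp_pos _),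
      mul_assoc _ _ (j + 1 : ℝ)]
    exact mul_le_mul (mul_le_mul_of_nonneg_left (exp_mul_le_exp_abs c hx) (sqrt_nonneg 2))
      (htrig.trans hω) (abs_nonneg _) (by positivity)
  simpa [Real.norm_eq_abs] using (convex_Icc (0 : ℝ) 1).norm_image_sub_le_of_norm_hasDerivWithin_le
    (fun x _ => (hderiv x).hasDerivWithinAt) hbound hy' hy

lemma sigma_succ_ge (a b : ℝ) (ha : 0 < a) (j : ℕ) :
    a * π ^ 2 * ((j : ℝ) + 1) ^ 2 ≤ sigma' a b (j + 1) := by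
  rw [sigma']; push_cast; nlinarith [sq_nonneg (cc a b)]

lemma sigma_succ_pos (a b : ℝ) (ha : 0 < a) (j : ℕ) : 0 < sigma' a b (j + 1) :=
  (by positivity : 0 < a * π ^ 2 * ((j : ℝ) + 1) ^ 2).trans_le (sigma_succ_ge a b ha j)

lemma summable_exp_neg_sigma_mul {a b s U : ℝ} (ha : 0 < a) (hs : 0 < s) {u : ℕ → ℝ}
    (hu : ∀ j, |u j| ≤ U) : Summable fun j => exp (-sigma' a b j * s) * u j := by
  have hr : exp (-(a * π ^ 2 * s)) < 1 := exp_lt_one_iff.2 (by simp only [neg_lt_zero]; positivity)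
  refine ((summable_geometric_of_lt_one (exp_pos _).le hr).mul_right U).of_norm_bounded fun j => ?_
  rw [norm_mul, Real.norm_eq_abs, abs_of_pos (exp_pos _), ← exp_nat_mul]
  refine mul_le_mul (exp_le_exp.2 ?_) (hu j) (abs_nonneg _) (exp_pos _).le
  have hj : (j : ℝ) ≤ (j : ℝ) ^ 2 := by
    rcases j.eq_zero_or_pos with rfl | hj
    · simp
    · nlinarith [(Nat.one_le_cast (α := ℝ)).2 hj]
  have : a * π ^ 2 * (j : ℝ) ^ 2 ≤ sigma' a b j := by
    rw [sigma']; nlinarith [sq_nonneg (cc a b)]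
  nlinarith [mul_pos (mul_pos ha (pow_pos pi_pos 2)) hs]

lemma greenP_sub_eq {a b s β₁ β₂ x : ℝ} (ha : 0 < a) (hs : 0 < s) (h1 : β₁ ∈ Icc (0 : ℝ) 1)
    (h2 : β₂ ∈ Icc (0 : ℝ) 1) (hx : x ∈ Icc (0 : ℝ) 1) :
    greenP a b s β₁ x - greenP a b s β₂ x = exp (cc a b * x) *
      ∑' j, exp (-sigma' a b (j + 1) * s) * (psi a b (j + 1) β₁ - psi a b (j + 1) β₂) *
        phi a b (j + 1) x := by
  obtain ⟨B, hB⟩ := exists_abs_psi_le a b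
  have hsum : ∀ β ∈ Icc (0 : ℝ) 1,
      Summable fun j => exp (-sigma' a b j * s) * psi a b j β * psi a b j x := fun β hβ => by
    simp_rw [mul_assoc]
    refine summable_exp_neg_sigma_mul ha hs (U := B * B) fun j => ?_
    rw [abs_mul]
    exact mul_le_mul (hB j β hβ) (hB j x hx) (abs_nonneg _) ((abs_nonneg _).trans (hB j x hx))
  rw [greenP, greenP, ← (hsum β₁ h1).tsum_sub (hsum β₂ h2),
    ((hsum β₁ h1).sub (hsum β₂ h2)).tsum_eq_zero_add, ← tsum_mul_left]
  simp only [psi_succ]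
  rw [show psi a b 0 β₁ = psi a b 0 β₂ from rfl, sub_self, zero_add]
  exact tsum_congr fun j => by ring

theorem integral_sq_greenP_sub_le {a b s β₁ β₂ : ℝ} (ha : 0 < a) (hb : b ≠ 0) (hs : 0 < s)
    (h1 : β₁ ∈ Icc (0 : ℝ) 1) (h2 : β₂ ∈ Icc (0 : ℝ) 1) :
    ∫ x in (0 : ℝ)..1, (greenP a b s β₁ x - greenP a b s β₂ x) ^ 2 ≤
      ∑' j, exp (2 * |cc a b|) * (psi a b (j + 1) β₁ - psi a b (j + 1) β₂) ^ 2 *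
        exp (-(2 * sigma' a b (j + 1)) * s) := by
  set α : ℕ → ℝ := fun j =>
    exp (-sigma' a b (j + 1) * s) * (psi a b (j + 1) β₁ - psi a b (j + 1) β₂)
  set h : ℝ → ℝ := fun x => ∑' j, α j * phi a b (j + 1) x
  obtain ⟨B, hB⟩ := exists_abs_psi_le a b
  have hα : Summable fun j => |α j| := by
    simp_rw [α, abs_mul, abs_of_pos (exp_pos _)]
    refine (summable_exp_neg_sigma_mul ha hs (U := 2 * B) (u := fun j =>
      |psi a b j β₁ - psi a b j β₂|) fun j => ?_).comp_injective (add_left_injective 1)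
    rw [abs_abs]
    linarith [abs_sub (psi a b j β₁) (psi a b j β₂), hB j β₁ h1, hB j β₂ h2]
  have hφb : ∀ j x, |phi a b (j + 1) x| ≤ √2 := fun j x => abs_phi_le a b (j + 1) x
  have hφc : ∀ j, Continuous (phi a b (j + 1)) := fun j => by unfold phi; fun_prop
  have hh : Continuous h :=
    continuous_tsum (fun j => continuous_const.mul (hφc j)) (hα.mul_right √2) fun j x => by
    rw [norm_mul, Real.norm_eq_abs, Real.norm_eq_abs]
    exact mul_le_mul_of_nonneg_left (hφb j x) (abs_nonneg _)
  have hparseval : ∫ x in (0 : ℝ)..1, h x ^ 2 = ∑' j, α j ^ 2 := by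
    rw [intervalIntegral.integral_of_le zero_le_one]
    refine integral_tsum_mul_sq_eq_tsum_sq (fun j => (hφc j).aestronglyMeasurable) hφb
      (fun j k => ?_) hα
    rw [← intervalIntegral.integral_of_le zero_le_one]
    split_ifs with hjk
    · rw [hjk]; exact integral_phi_sq k.succ_ne_zero
    · exact integral_phi_mul_phi_of_ne ha hb (by omega)
  calc ∫ x in (0 : ℝ)..1, (greenP a b s β₁ x - greenP a b s β₂ x) ^ 2
      = ∫ x in (0 : ℝ)..1, (exp (cc a b * x) * h x) ^ 2 := by
        refine intervalIntegral.integral_congr fun x hx => ?_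
        rw [uIcc_of_le zero_le_one] at hx
        simp only [greenP_sub_eq ha hs h1 h2 hx, h, α]
    _ ≤ ∫ x in (0 : ℝ)..1, exp (2 * |cc a b|) * h x ^ 2 := by
        refine intervalIntegral.integral_mono_on zero_le_one
          ((by fun_prop : Continuous _).intervalIntegrable _ _)
          ((by fun_prop : Continuous _).intervalIntegrable _ _) fun x hx => ?_
        rw [mul_pow, ← exp_nat_mul, Nat.cast_ofNat]
        have hcx := exp_le_exp.1 (exp_mul_le_exp_abs (cc a b) hx)
        exact mul_le_mul_of_nonneg_right (exp_le_exp.2 (by linarith)) (sq_nonneg _)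
    _ = ∑' j, exp (2 * |cc a b|) * (psi a b (j + 1) β₁ - psi a b (j + 1) β₂) ^ 2 *
        exp (-(2 * sigma' a b (j + 1)) * s) := by
        rw [intervalIntegral.integral_const_mul, hparseval, ← tsum_mul_left]
        refine tsum_congr fun j => ?_
        rw [mul_pow, ← exp_nat_mul]
        push_cast; ring_nf

lemma exists_sq_psi_succ_sub_div_le (a b : ℝ) (ha : 0 < a) : ∃ C, 0 ≤ C ∧ ∀ j : ℕ,
    ∀ β₁ ∈ Icc (0 : ℝ) 1, ∀ β₂ ∈ Icc (0 : ℝ) 1,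
      (psi a b (j + 1) β₁ - psi a b (j + 1) β₂) ^ 2 / (2 * sigma' a b (j + 1)) ≤
        C * √|β₁ - β₂| * (√((j : ℝ) + 1) / ((j : ℝ) + 1) ^ 2) := by
  obtain ⟨B, hB⟩ := exists_abs_psi_le a b
  obtain ⟨L, hL⟩ := exists_abs_psi_succ_sub_le a b
  have hB0 : 0 ≤ B := (abs_nonneg _).trans (hB 0 0 ⟨le_rfl, zero_le_one⟩)
  refine ⟨2 * B * √(2 * B * L) / (2 * a * π ^ 2), by positivity, fun j β₁ h1 β₂ h2 => ?_⟩
  have hd := sq_le_mul_sqrt_mul_of_abs_le (A := 2 * B)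
    (by linarith [abs_sub (psi a b (j + 1) β₁) (psi a b (j + 1) β₂), hB (j + 1) β₁ h1,
      hB (j + 1) β₂ h2]) (hL j β₁ h1 β₂ h2)
  have hσ := sigma_succ_ge a b ha j
  calc (psi a b (j + 1) β₁ - psi a b (j + 1) β₂) ^ 2 / (2 * sigma' a b (j + 1))
      ≤ (psi a b (j + 1) β₁ - psi a b (j + 1) β₂) ^ 2 / (2 * (a * π ^ 2 * ((j : ℝ) + 1) ^ 2)) :=
        div_le_div_of_nonneg_left (sq_nonneg _) (by positivity) (by linarith)
    _ ≤ 2 * B * √(2 * B * (L * ((j : ℝ) + 1) * |β₁ - β₂|)) /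
          (2 * (a * π ^ 2 * ((j : ℝ) + 1) ^ 2)) := by gcongr
    _ = 2 * B * √(2 * B * L) / (2 * a * π ^ 2) * √|β₁ - β₂| *
          (√((j : ℝ) + 1) / ((j : ℝ) + 1) ^ 2) := by
        rw [show 2 * B * (L * ((j : ℝ) + 1) * |β₁ - β₂|) = 2 * B * L * (((j : ℝ) + 1) * |β₁ - β₂|)
          by ring, sqrt_mul' _ (by positivity), sqrt_mul' _ (abs_nonneg _)]
        field_simp

lemma exists_tsum_sq_psi_succ_sub_div_le (a b : ℝ) (ha : 0 < a) : ∃ C, 0 ≤ C ∧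
    ∀ β₁ ∈ Icc (0 : ℝ) 1, ∀ β₂ ∈ Icc (0 : ℝ) 1,
      Summable (fun j => (psi a b (j + 1) β₁ - psi a b (j + 1) β₂) ^ 2 / (2 * sigma' a b (j + 1)))
      ∧ ∑' j, (psi a b (j + 1) β₁ - psi a b (j + 1) β₂) ^ 2 / (2 * sigma' a b (j + 1)) ≤
        C * √|β₁ - β₂| := by
  obtain ⟨C, hC0, hC⟩ := exists_sq_psi_succ_sub_div_le a b ha
  refine ⟨C * ∑' j : ℕ, √((j : ℝ) + 1) / ((j : ℝ) + 1) ^ 2,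
    mul_nonneg hC0 (tsum_nonneg fun j => by positivity), fun β₁ h1 β₂ h2 => ?_⟩
  have hsum := (summable_sqrt_div_sq.mul_left (C * √|β₁ - β₂|)).of_nonneg_of_le
    (fun j => div_nonneg (sq_nonneg _) (by linarith [sigma_succ_pos a b ha j])) (hC · β₁ h1 β₂ h2)
  refine ⟨hsum, (hsum.tsum_le_tsum (hC · β₁ h1 β₂ h2)
    (summable_sqrt_div_sq.mul_left _)).trans_eq ?_⟩
  rw [tsum_mul_left]
  ring

/-- for every `t₁ > 0` there is a finite constant `K` (depending only
on `a`, `b`, `t₁`) such that for all `β₁, β₂ ∈ [0,1]`,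
`∫₀^{t₁} ∫₀¹ (P_s(β₁,x) - P_s(β₂,x))² dx ds ≤ K(|β₁-β₂|² + |β₁-β₂|^{1/2})`. -/
theorem green_kernel_L2_continuity (a b : ℝ) (ha : 0 < a) (hb : b ≠ 0)
    (t₁ : ℝ) (ht₁ : 0 < t₁) :
    ∃ K : ℝ, ∀ β₁ ∈ Set.Icc (0 : ℝ) 1, ∀ β₂ ∈ Set.Icc (0 : ℝ) 1,
      (∫ s in (0 : ℝ)..t₁, ∫ x in (0 : ℝ)..1,
          (greenP a b s β₁ x - greenP a b s β₂ x) ^ 2)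
        ≤ K * (|β₁ - β₂| ^ 2 + Real.sqrt |β₁ - β₂|) := by
  obtain ⟨C, hC0, hC⟩ := exists_tsum_sq_psi_succ_sub_div_le a b ha
  refine ⟨exp (2 * |cc a b|) * C, fun β₁ h1 β₂ h2 => ?_⟩
  obtain ⟨hsum, hle⟩ := hC β₁ h1 β₂ h2
  calc (∫ s in (0 : ℝ)..t₁, ∫ x in (0 : ℝ)..1, (greenP a b s β₁ x - greenP a b s β₂ x) ^ 2)
      ≤ ∑' j, exp (2 * |cc a b|) * (psi a b (j + 1) β₁ - psi a b (j + 1) β₂) ^ 2 /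
          (2 * sigma' a b (j + 1)) := by
        rw [intervalIntegral.integral_of_le ht₁.le]
        refine integral_le_tsum_div_of_abs_le_tsum_mul_exp Ioc_subset_Ioi_self
          (fun j => by positivity) (fun j => by linarith [sigma_succ_pos a b ha j])
          (by simpa only [mul_div_assoc] using hsum.mul_left (exp (2 * |cc a b|))) fun s hs => ?_
        rw [abs_of_nonneg (intervalIntegral.integral_nonneg zero_le_one fun _ _ => sq_nonneg _)]
        exact integral_sq_greenP_sub_le ha hb hs h1 h2
    _ = exp (2 * |cc a b|) *
          ∑' j, (psi a b (j + 1) β₁ - psi a b (j + 1) β₂) ^ 2 / (2 * sigma' a b (j + 1)) := by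
        simp_rw [mul_div_assoc]
        exact tsum_mul_left
    _ ≤ exp (2 * |cc a b|) * C * (|β₁ - β₂| ^ 2 + √|β₁ - β₂|) := by
        rw [mul_assoc]
        gcongr
        exact hle.trans (mul_le_mul_of_nonneg_left (le_add_of_nonneg_left (sq_nonneg _)) hC0)
end
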